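/- arXiv:1101.5221 — 3 statements merged into one kernel-verified Lean document; each statement's English description precedes it below -/
import Mathlib

section
/- If x' = x·2^(a/c) + (1/w)·(2^(a/c) − 1) with 0 ≤ a ≤ c, c > 0, w > 0, and x ≥ 0, then (x' − x)·c ≤ (x + 1/w)·a. -/
lemma two_rpow_le (t : ℝ) (h0 : 0 ≤ t) (h1 : t ≤ 1) : (2:ℝ) ^ t ≤ 1 + t := by
  have h := (convexOn_exp).2 (Set.mem_univ 0) (Set.mem_univ (Real.log 2))
    (by linarith : (0:ℝ) ≤ 1 - t) h0 (by ring)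
  simp only [smul_eq_mul, mul_zero, zero_add, Real.exp_zero, Real.exp_log (by norm_num : (0:ℝ) < 2)] at h
  rw [Real.rpow_def_of_pos (by norm_num : (0:ℝ) < 2), mul_comm]
  calc Real.exp (t * Real.log 2) ≤ (1 - t) * 1 + t * 2 := h
    _ = 1 + t := by ring

theorem stmt_0 (x x' a c w : ℝ) (hx : 0 ≤ x) (hc : 0 < c) (hw : 0 < w)
    (ha0 : 0 ≤ a) (hac : a ≤ c)
    (hupd : x' = x * (2:ℝ) ^ (a / c) + (1 / w) * ((2:ℝ) ^ (a / c) - 1)) :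
    (x' - x) * c ≤ (x + 1 / w) * a := by
  have ht0 : 0 ≤ a / c := div_nonneg ha0 hc.le
  have ht1 : a / c ≤ 1 := (div_le_one hc).2 hac
  have key := two_rpow_le (a / c) ht0 ht1
  have hxw : 0 ≤ x + 1 / w := by positivity
  have h1 : x' - x = (x + 1 / w) * ((2:ℝ) ^ (a / c) - 1) := by rw [hupd]; ring
  have h2 : (x + 1 / w) * ((2:ℝ) ^ (a / c) - 1) ≤ (x + 1 / w) * (a / c) := by
    apply mul_le_mul_of_nonneg_left (by linarith) hxw
  rw [h1]
  calc (x + 1/w) * ((2:ℝ) ^ (a/c) - 1) * c ≤ (x + 1/w) * (a/c) * c :=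
        mul_le_mul_of_nonneg_right h2 hc.le
    _ = (x + 1/w) * a := by field_simp
end

section
/- Let (x_j), (s_j) be sequences of nonnegative reals with x_0 = 0 satisfying, for all j ≥ 1, x_j ≥ x_{j−1}·2^{a_j} + (1/W)·(2^{a_j} − 1) where a_j ≥ 0 and W > 0, and let s_j = a_1 + ⋯ + a_j. Then for every j, x_j ≥ (1/W)·(2^{s_j} − 1). -/
/-!
Shifting by the constant `1 / W` turns the recursion into a multiplicative one:
`x j + 1 / W ≥ (x (j - 1) + 1 / W) * 2 ^ (a j)`. Iterating from `x 0 + 1 / W = 1 / W` gives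
`x j + 1 / W ≥ (1 / W) * ∏ 2 ^ (a i) = (1 / W) * 2 ^ (s j)`.
-/

open Finset

theorem mul_prod_Icc_le_of_mul_le_succ {y r : ℕ → ℝ} (hr : ∀ n, 0 ≤ r n)
    (h : ∀ n, y n * r (n + 1) ≤ y (n + 1)) (n : ℕ) :
    y 0 * ∏ i ∈ Icc 1 n, r i ≤ y n := by
  induction n with
  | zero => simp
  | succ n ih =>
    calc y 0 * ∏ i ∈ Icc 1 (n + 1), r i = (y 0 * ∏ i ∈ Icc 1 n, r i) * r (n + 1) := by
          rw [prod_Icc_succ_top (by omega), mul_assoc]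
      _ ≤ y n * r (n + 1) := mul_le_mul_of_nonneg_right ih (hr _)
      _ ≤ y (n + 1) := h n

theorem stmt_2_general (x a s : ℕ → ℝ) (W : ℝ)
    (hx0 : x 0 = 0)
    (hrec : ∀ j ≥ 1, x j ≥ x (j - 1) * (2:ℝ) ^ (a j) + (1 / W) * ((2:ℝ) ^ (a j) - 1))
    (hs : ∀ j, s j = ∑ i ∈ Finset.Icc 1 j, a i) :
    ∀ j, x j ≥ (1 / W) * ((2:ℝ) ^ (s j) - 1) := by
  intro j
  have hshift : ∀ n, (x n + 1 / W) * (2:ℝ) ^ a (n + 1) ≤ x (n + 1) + 1 / W := fun n => by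
    have := hrec (n + 1) (by omega)
    rw [Nat.add_sub_cancel] at this
    linarith
  have hprod := mul_prod_Icc_le_of_mul_le_succ (fun i => (Real.rpow_pos_of_pos two_pos (a i)).le)
    hshift j
  rw [hx0, zero_add, ← Real.rpow_sum_of_pos two_pos, ← hs] at hprod
  linarith

theorem stmt_2 (x a s : ℕ → ℝ) (W : ℝ) (hW : 0 < W)
    (hx0 : x 0 = 0) (hxnn : ∀ j, 0 ≤ x j) (ha : ∀ j, 0 ≤ a j)
    (hrec : ∀ j ≥ 1, x j ≥ x (j - 1) * (2:ℝ) ^ (a j) + (1 / W) * ((2:ℝ) ^ (a j) - 1))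
    (hs : ∀ j, s j = ∑ i ∈ Finset.Icc 1 j, a i) :
    ∀ j, x j ≥ (1 / W) * ((2:ℝ) ^ (s j) - 1) :=
  stmt_2_general x a s W hx0 hrec hs
end

section
/- In the hose model with tree routing, for a Steiner tree T spanning terminal set U and an edge e of T inducing the partition A_e ∪ B_e of U, the maximum possible traffic across e over all traffic matrices M consistent with the hose constraints (Σ_v M(u,v) ≤ b_out(u) for each u and Σ_u M(u,v) ≤ b_in(v) for each v, all entries nonnegative) equals min{Σ_{u∈A_e} b_out(u), Σ_{v∈B_e} b_in(v)} + min{Σ_{u∈A_e} b_in(u), Σ_{v∈B_e} b_out(v)}. -/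
/-!
Every unit of traffic from `A` to `B = Aᶜ` leaves a terminal of `A` and enters one of `B`, so
it is bounded by both `∑_A b_out` and `∑_B b_in`; likewise in the other direction. Conversely
the gravity matrix `b_out u * b_in v / max (∑_A b_out) (∑_B b_in)` on `A × B` respects every
hose bound and carries exactly `min (∑_A b_out) (∑_B b_in)`, since `x * y / max x y = min x y`;
adding the analogous matrix on `B × A` attains the bound.
-/

open Finset

variable {α β : Type*}

lemma sum_sum_le_sum_of_row_sum_le [Fintype β] {M : α → β → ℝ} {r : α → ℝ}
    (hM : ∀ u v, 0 ≤ M u v) (hrow : ∀ u, ∑ v, M u v ≤ r u) (S : Finset α) (T : Finset β) :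
    ∑ u ∈ S, ∑ v ∈ T, M u v ≤ ∑ u ∈ S, r u :=
  sum_le_sum fun u _ => (sum_le_univ_sum_of_nonneg (hM u)).trans (hrow u)

lemma sum_sum_le_min_of_row_col_sum_le [Fintype α] [Fintype β] {M : α → β → ℝ}
    {r : α → ℝ} {c : β → ℝ}
    (hM : ∀ u v, 0 ≤ M u v) (hrow : ∀ u, ∑ v, M u v ≤ r u) (hcol : ∀ v, ∑ u, M u v ≤ c v)
    (S : Finset α) (T : Finset β) :
    ∑ u ∈ S, ∑ v ∈ T, M u v ≤ min (∑ u ∈ S, r u) (∑ v ∈ T, c v) := by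
  refine le_min (sum_sum_le_sum_of_row_sum_le hM hrow S T) ?_
  rw [sum_comm]
  exact sum_sum_le_sum_of_row_sum_le (fun v u => hM u v) hcol T S

lemma mul_div_max_eq_min {x y : ℝ} (hx : 0 ≤ x) (hy : 0 ≤ y) : x * y / max x y = min x y := by
  rcases (le_max_of_le_left hx : 0 ≤ max x y).eq_or_lt with h | h
  · have hx0 : x = 0 := le_antisymm (h ▸ le_max_left x y) hx
    have hy0 : y = 0 := le_antisymm (h ▸ le_max_right x y) hy
    simp [hx0, hy0]
  · rw [← min_mul_max x y, mul_div_cancel_right₀ _ h.ne']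

noncomputable def gravityMatrix [DecidableEq α] [DecidableEq β] (S : Finset α) (T : Finset β)
    (a : α → ℝ) (b : β → ℝ) : α → β → ℝ :=
  fun u v => if u ∈ S ∧ v ∈ T then a u * b v / max (∑ u ∈ S, a u) (∑ v ∈ T, b v) else 0

section gravityMatrix

variable [DecidableEq α] [DecidableEq β] {S : Finset α} {T : Finset β} {a : α → ℝ} {b : β → ℝ}

lemma gravityMatrix_nonneg (ha : ∀ u, 0 ≤ a u) (hb : ∀ v, 0 ≤ b v) (u : α) (v : β) :
    0 ≤ gravityMatrix S T a b u v := by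
  unfold gravityMatrix
  split_ifs
  · exact div_nonneg (mul_nonneg (ha u) (hb v)) (le_max_of_le_left (sum_nonneg fun u _ => ha u))
  · exact le_rfl

lemma gravityMatrix_eq_zero_of_left_notMem {u : α} (hu : u ∉ S) (v : β) :
    gravityMatrix S T a b u v = 0 := by
  simp [gravityMatrix, hu]

lemma gravityMatrix_eq_zero_of_right_notMem (u : α) {v : β} (hv : v ∉ T) :
    gravityMatrix S T a b u v = 0 := by
  simp [gravityMatrix, hv]

lemma sum_sum_gravityMatrix (ha : ∀ u, 0 ≤ a u) (hb : ∀ v, 0 ≤ b v) :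
    ∑ u ∈ S, ∑ v ∈ T, gravityMatrix S T a b u v = min (∑ u ∈ S, a u) (∑ v ∈ T, b v) := by
  rw [← mul_div_max_eq_min (sum_nonneg fun u _ => ha u) (sum_nonneg fun v _ => hb v),
    sum_mul_sum, sum_div]
  refine sum_congr rfl fun u hu => ?_
  rw [sum_div]
  exact sum_congr rfl fun v hv => if_pos (show u ∈ S ∧ v ∈ T from ⟨hu, hv⟩)

lemma sum_sum_gravityMatrix_of_disjoint_left {S' : Finset α} (h : Disjoint S' S) (T' : Finset β) :
    ∑ u ∈ S', ∑ v ∈ T', gravityMatrix S T a b u v = 0 :=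
  sum_eq_zero fun _ hu => sum_eq_zero fun v _ =>
    gravityMatrix_eq_zero_of_left_notMem (disjoint_left.mp h hu) v

lemma gravityMatrix_comm (u : α) (v : β) :
    gravityMatrix S T a b u v = gravityMatrix T S b a v u := by
  simp only [gravityMatrix, and_comm, mul_comm, max_comm]

lemma sum_gravityMatrix_row_le [Fintype β] (ha : ∀ u, 0 ≤ a u) (hb : ∀ v, 0 ≤ b v) (u : α) :
    ∑ v, gravityMatrix S T a b u v ≤ if u ∈ S then a u else 0 := by
  by_cases hu : u ∈ S
  · have hT : 0 ≤ ∑ v ∈ T, b v := sum_nonneg fun v _ => hb v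
    calc ∑ v, gravityMatrix S T a b u v
        = ∑ v ∈ T, gravityMatrix S T a b u v :=
          (sum_subset (subset_univ T) fun v _ hv => gravityMatrix_eq_zero_of_right_notMem u hv).symm
      _ = a u * ((∑ v ∈ T, b v) / max (∑ u ∈ S, a u) (∑ v ∈ T, b v)) := by
          rw [← mul_div_assoc, mul_sum, sum_div]
          exact sum_congr rfl fun v hv => if_pos (show u ∈ S ∧ v ∈ T from ⟨hu, hv⟩)
      _ ≤ a u := mul_le_of_le_one_right (ha u)
          (div_le_one_of_le₀ (le_max_right _ _) (le_max_of_le_right hT))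
      _ = _ := (if_pos hu).symm
  · rw [if_neg hu]
    exact (sum_eq_zero fun v _ => gravityMatrix_eq_zero_of_left_notMem hu v).le

lemma sum_gravityMatrix_col_le [Fintype α] (ha : ∀ u, 0 ≤ a u) (hb : ∀ v, 0 ≤ b v) (v : β) :
    ∑ u, gravityMatrix S T a b u v ≤ if v ∈ T then b v else 0 :=
  (sum_congr rfl fun u _ => gravityMatrix_comm u v).trans_le (sum_gravityMatrix_row_le hb ha v)

end gravityMatrix

theorem stmt_10 (U : Type) [Fintype U] [DecidableEq U]
    (bin bout : U → ℝ) (hbin : ∀ u, 0 ≤ bin u) (hbout : ∀ u, 0 ≤ bout u)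
    (Ae : Finset U) :
    IsGreatest
      {x : ℝ | ∃ M : U → U → ℝ,
        (∀ u v, 0 ≤ M u v) ∧
        (∀ u, (∑ v, M u v) ≤ bout u) ∧
        (∀ v, (∑ u, M u v) ≤ bin v) ∧
        x = (∑ u ∈ Ae, ∑ v ∈ Aeᶜ, M u v) + (∑ u ∈ Aeᶜ, ∑ v ∈ Ae, M u v)}
      (min (∑ u ∈ Ae, bout u) (∑ v ∈ Aeᶜ, bin v) +
       min (∑ u ∈ Ae, bin u) (∑ v ∈ Aeᶜ, bout v)) := by
  set G₁ := gravityMatrix Ae Aeᶜ bout bin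
  set G₂ := gravityMatrix Aeᶜ Ae bout bin
  refine ⟨⟨fun u v => G₁ u v + G₂ u v, fun u v => ?_, fun u => ?_, fun v => ?_, ?_⟩, ?_⟩
  · exact add_nonneg (gravityMatrix_nonneg hbout hbin u v) (gravityMatrix_nonneg hbout hbin u v)
  · calc ∑ v, (G₁ u v + G₂ u v) = ∑ v, G₁ u v + ∑ v, G₂ u v := sum_add_distrib
      _ ≤ (if u ∈ Ae then bout u else 0) + (if u ∈ Aeᶜ then bout u else 0) :=
          add_le_add (sum_gravityMatrix_row_le hbout hbin u) (sum_gravityMatrix_row_le hbout hbin u)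
      _ = bout u := by by_cases hu : u ∈ Ae <;> simp [hu]
  · calc ∑ u, (G₁ u v + G₂ u v) = ∑ u, G₁ u v + ∑ u, G₂ u v := sum_add_distrib
      _ ≤ (if v ∈ Aeᶜ then bin v else 0) + (if v ∈ Ae then bin v else 0) :=
          add_le_add (sum_gravityMatrix_col_le hbout hbin v) (sum_gravityMatrix_col_le hbout hbin v)
      _ = bin v := by by_cases hv : v ∈ Ae <;> simp [hv]
  · simp only [sum_add_distrib]
    rw [sum_sum_gravityMatrix hbout hbin, sum_sum_gravityMatrix hbout hbin,
      sum_sum_gravityMatrix_of_disjoint_left disjoint_compl_right,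
      sum_sum_gravityMatrix_of_disjoint_left disjoint_compl_left, min_comm (∑ v ∈ Aeᶜ, bout v)]
    ring
  · rintro _ ⟨M, hM, hrow, hcol, rfl⟩
    rw [min_comm (∑ u ∈ Ae, bin u)]
    exact add_le_add (sum_sum_le_min_of_row_col_sum_le hM hrow hcol Ae Aeᶜ)
      (sum_sum_le_min_of_row_col_sum_le hM hrow hcol Aeᶜ Ae)
end
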